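/- arXiv:2208.03555 — 2 statements merged into one kernel-verified Lean document; each statement's English description precedes it below -/
import Mathlib

section
/- For any modal formula A, the following are equivalent: (1) A is a theorem of MNP; (2) A is valid in all MNP-frames; (3) A is valid in all finite MNP-frames. -/
/-- Modal formulas: variables, ⊥, →, □. -/
inductive Fml : Type
  | var : ℕ → Fml
  | bot : Fml
  | imp : Fml → Fml → Fml
  | box : Fml → Fml
  deriving DecidableEq

namespace Fml

/-- ¬A is an abbreviation for A → ⊥. -/
def neg (A : Fml) : Fml := imp A bot

/-- ⊤ is an abbreviation for ¬⊥. -/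
def top : Fml := neg bot

/-- A ∧ B is an abbreviation for ¬(A → ¬B). -/
def and (A B : Fml) : Fml := neg (imp A (neg B))

/-- Uniform substitution. -/
def subst (σ : ℕ → Fml) : Fml → Fml
  | var n => σ n
  | bot => bot
  | imp A B => imp (subst σ A) (subst σ B)
  | box A => box (subst σ A)

end Fml

/-- A formula is a propositional tautology if it is true under every valuation
that respects ⊥ and →, treating variables and boxed formulas as atoms. -/
def IsTautology (A : Fml) : Prop :=
  ∀ val : Fml → Bool,
    (val Fml.bot = false) →
    (∀ B C : Fml, val (Fml.imp B C) = (!(val B) || val C)) →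
    val A = true

/-- Provability in the extension of the logic MN by the axioms in `Ax`:
axioms are all propositional tautologies and the members of `Ax`; the rules
are Modus Ponens, Necessitation, and RM. -/
inductive MNProv (Ax : Fml → Prop) : Fml → Prop
  | taut {A : Fml} : IsTautology A → MNProv Ax A
  | ax {A : Fml} : Ax A → MNProv Ax A
  | mp {A B : Fml} : MNProv Ax (A.imp B) → MNProv Ax A → MNProv Ax B
  | nec {A : Fml} : MNProv Ax A → MNProv Ax A.box
  | rm {A B : Fml} : MNProv Ax (A.imp B) → MNProv Ax (A.box.imp B.box)

/-- The axiom P : ¬□⊥. -/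
def AxP : Fml → Prop := fun A => A = (Fml.box Fml.bot).neg

/-- The axiom scheme D : ¬(□B ∧ □¬B). -/
def AxD : Fml → Prop := fun A => ∃ B : Fml, A = ((B.box).and (B.neg.box)).neg

/-- The axiom scheme 4 : □B → □□B. -/
def AxF : Fml → Prop := fun A => ∃ B : Fml, A = B.box.imp B.box.box

def MN : Fml → Prop := MNProv (fun _ => False)
def MNP : Fml → Prop := MNProv AxP
def MND : Fml → Prop := MNProv AxD
def MNF : Fml → Prop := MNProv AxF
def MNPF : Fml → Prop := MNProv (fun A => AxP A ∨ AxF A)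
def MNDF : Fml → Prop := MNProv (fun A => AxD A ∨ AxF A)

/-- An MN-frame: a nonempty set `W` together with a relation between worlds and
nonempty subsets of `W` satisfying monotonicity. -/
structure MNFrame (W : Type*) where
  nonempty : Nonempty W
  rel : W → Set W → Prop
  rel_nonempty : ∀ (x : W) (V : Set W), rel x V → V.Nonempty
  mono : ∀ (x : W) (V U : Set W), rel x V → V ⊆ U → rel x U

/-- `Sat` is a satisfaction relation on the MN-frame `F`. -/
structure IsSat {W : Type*} (F : MNFrame W) (Sat : W → Fml → Prop) : Prop where
  bot : ∀ x : W, ¬ Sat x Fml.bot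
  imp : ∀ (x : W) (A B : Fml), Sat x (A.imp B) ↔ (Sat x A → Sat x B)
  box : ∀ (x : W) (A : Fml), Sat x A.box ↔ ∀ V : Set W, F.rel x V → ∃ y ∈ V, Sat y A

/-- A formula is valid in an MN-frame if it is satisfied at every world under
every satisfaction relation on the frame. -/
def Valid {W : Type*} (F : MNFrame W) (A : Fml) : Prop :=
  ∀ Sat : W → Fml → Prop, IsSat F Sat → ∀ x : W, Sat x A

/-- Transitivity of an MN-frame. -/
def MNFrame.IsTransitive {W : Type*} (F : MNFrame W) : Prop :=
  ∀ (x : W) (V : Set W) (U : W → Set W),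
    F.rel x V → (∀ y ∈ V, F.rel y (U y)) → F.rel x (⋃ y ∈ V, U y)

/-- MNP-frames: every world is related to some subset. -/
def MNFrame.IsMNP {W : Type*} (F : MNFrame W) : Prop :=
  ∀ x : W, ∃ V : Set W, F.rel x V

/-- MND-frames: every world is related to `V` or to its complement. -/
def MNFrame.IsMND {W : Type*} (F : MNFrame W) : Prop :=
  ∀ (x : W) (V : Set W), F.rel x V ∨ F.rel x Vᶜ


/-! Soundness is a routine induction on derivations: Necessitation holds because neighbourhoods
are nonempty, and ¬□⊥ because in an MNP-frame every world has one.

For completeness, an unprovable `A` is refuted in a finite canonical model. Its worlds are the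
consistent atoms over the subformulas of `A → □⊥`: sets `t` of such subformulas whose
characteristic formula (the members of `t` and the negations of the others) is consistent.
A world `w` sees the nonempty supersets of the sets `{y | C ∉ y}` with `□C ∉ w`; RM is what
turns `□B ∈ w` into a world of each such set containing `B`. Since `⊢ ¬□⊥`, the choice `C = ⊥`
lets every world see the whole model, so the canonical frame is an MNP-frame. -/

def IsValuation (v : Fml → Bool) : Prop :=
  v Fml.bot = false ∧ ∀ B C, v (Fml.imp B C) = (!v B || v C)

theorem isTautology_iff {A : Fml} : IsTautology A ↔ ∀ v, IsValuation v → v A = true :=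
  ⟨fun h v hv => h v hv.1 hv.2, fun h v hbot himp => h v ⟨hbot, himp⟩⟩

namespace IsValuation

variable {v : Fml → Bool}

theorem map_neg (hv : IsValuation v) (A : Fml) : v A.neg = !v A := by
  simp [Fml.neg, hv.1, hv.2]

theorem map_top (hv : IsValuation v) : v Fml.top = true := by
  simp [Fml.top, hv.map_neg, hv.1]

theorem map_and (hv : IsValuation v) (A B : Fml) : v (A.and B) = (v A && v B) := by
  simp [Fml.and, hv.2, hv.map_neg]

theorem map_conj (hv : IsValuation v) (L : List Fml) :
    v (L.foldr Fml.and Fml.top) = L.all v := by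
  induction L with
  | nil => simp [hv.map_top]
  | cons A L ih => simp [hv.map_and, ih]

theorem map_foldr_imp (hv : IsValuation v) (Γ : List Fml) (Q : Fml) :
    v (Γ.foldr Fml.imp Q) = true ↔ ((∀ P ∈ Γ, v P = true) → v Q = true) := by
  induction Γ with
  | nil => simp
  | cons P Γ ih => cases h : v P <;> simp [hv.2, h, ih]

end IsValuation

namespace MNProv

variable {Ax : Fml → Prop}

theorem mp_foldr_imp {Q : Fml} :
    ∀ {Γ : List Fml}, MNProv Ax (Γ.foldr Fml.imp Q) → (∀ P ∈ Γ, MNProv Ax P) → MNProv Ax Q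
  | [], h, _ => h
  | P :: _, h, hΓ =>
    mp_foldr_imp (mp h (hΓ P List.mem_cons_self)) fun P' hP' => hΓ P' (List.mem_cons_of_mem _ hP')

theorem of_entails {Γ : List Fml} {Q : Fml} (hΓ : ∀ P ∈ Γ, MNProv Ax P)
    (h : ∀ v, IsValuation v → (∀ P ∈ Γ, v P = true) → v Q = true) : MNProv Ax Q :=
  mp_foldr_imp (taut (isTautology_iff.2 fun v hv => (hv.map_foldr_imp Γ Q).2 (h v hv))) hΓ

theorem top : MNProv Ax Fml.top :=
  of_entails (Γ := []) (by simp) fun _ hv _ => hv.map_top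

end MNProv

def Consistent (Ax : Fml → Prop) (φ : Fml) : Prop := ¬ MNProv Ax φ.neg

namespace Consistent

variable {Ax : Fml → Prop} {φ ψ : Fml}

theorem exists_valuation (h : Consistent Ax φ) : ∃ v, IsValuation v ∧ v φ = true := by
  by_contra! hv
  exact h (MNProv.of_entails (Γ := []) (by simp) fun v hv' _ => by
    simp [hv'.map_neg, hv v hv'])

theorem of_and_right (h : Consistent Ax (φ.and ψ)) : Consistent Ax ψ := fun hψ =>
  h (MNProv.of_entails (Γ := [ψ.neg]) (by simpa using hψ) fun v hv hΓ => by
    simp_all [hv.map_neg, hv.map_and])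

theorem neg_of_not_provable (h : ¬ MNProv Ax φ) : Consistent Ax φ.neg := fun hφ =>
  h (MNProv.of_entails (Γ := [φ.neg.neg]) (by simpa using hφ) fun v hv hΓ => by
    simpa [hv.map_neg] using hΓ)

theorem and_neg_of_not_provable_imp (h : ¬ MNProv Ax (φ.imp ψ)) :
    Consistent Ax (φ.and ψ.neg) := fun hφψ =>
  h (MNProv.of_entails (Γ := [(φ.and ψ.neg).neg]) (by simpa using hφψ) fun v hv hΓ => by
    cases v φ <;> simp_all [hv.map_neg, hv.map_and, hv.2])

end Consistent

noncomputable def charFml (S t : Finset Fml) : Fml :=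
  (S.toList.map fun B => if B ∈ t then B else B.neg).foldr Fml.and Fml.top

theorem IsValuation.charFml_eq_true_iff {v : Fml → Bool} (hv : IsValuation v)
    {S t : Finset Fml} : v (charFml S t) = true ↔ ∀ B ∈ S, (v B = true ↔ B ∈ t) := by
  simp only [charFml, hv.map_conj, List.all_map, List.all_eq_true, Finset.mem_toList,
    Function.comp_apply]
  refine forall₂_congr fun B _ => ?_
  by_cases hB : B ∈ t <;> simp [hB, hv.map_neg]

theorem Consistent.exists_consistent_and_charFml {Ax : Fml → Prop} {φ : Fml}
    (h : Consistent Ax φ) (S : Finset Fml) :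
    ∃ t ⊆ S, Consistent Ax (φ.and (charFml S t)) := by
  by_contra! hS
  refine h (MNProv.of_entails
    (Γ := S.powerset.toList.map fun t => (φ.and (charFml S t)).neg) ?_ fun v hv hΓ => ?_)
  · simpa [Consistent] using hS
  · have hatom := hΓ _ (List.mem_map.2 ⟨S.filter (v · = true), by simp, rfl⟩)
    have hchar : v (charFml S (S.filter (v · = true))) = true :=
      hv.charFml_eq_true_iff.2 fun B hB => by simp [hB]
    simpa [hv.map_neg, hv.map_and, hchar] using hatom

namespace Fml

def subformulas : Fml → Finset Fml
  | var n => {var n}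
  | bot => {bot}
  | imp B C => insert (imp B C) (B.subformulas ∪ C.subformulas)
  | box B => insert (box B) B.subformulas

theorem mem_subformulas_self (A : Fml) : A ∈ A.subformulas := by
  cases A <;> simp [subformulas]

theorem subformulas_subset_of_mem {A B : Fml} (h : B ∈ A.subformulas) :
    B.subformulas ⊆ A.subformulas := by
  induction A with
  | var n | bot => simp_all [subformulas]
  | imp A₁ A₂ ih₁ ih₂ =>
    simp only [subformulas, Finset.mem_insert, Finset.mem_union] at h
    rcases h with rfl | h | h
    · rfl
    · exact (ih₁ h).trans (Finset.subset_union_left.trans (Finset.subset_insert _ _))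
    · exact (ih₂ h).trans (Finset.subset_union_right.trans (Finset.subset_insert _ _))
  | box A₁ ih =>
    simp only [subformulas, Finset.mem_insert] at h
    rcases h with rfl | h
    · rfl
    · exact (ih h).trans (Finset.subset_insert _ _)

variable {A B C : Fml}

theorem mem_subformulas_of_imp_left (h : imp B C ∈ A.subformulas) : B ∈ A.subformulas :=
  subformulas_subset_of_mem h (by simp [subformulas, mem_subformulas_self])

theorem mem_subformulas_of_imp_right (h : imp B C ∈ A.subformulas) : C ∈ A.subformulas :=
  subformulas_subset_of_mem h (by simp [subformulas, mem_subformulas_self])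

theorem mem_subformulas_of_box (h : box B ∈ A.subformulas) : B ∈ A.subformulas :=
  subformulas_subset_of_mem h (by simp [subformulas, mem_subformulas_self])

end Fml

namespace Canonical

open Fml

variable (Ax : Fml → Prop) (A₀ : Fml)

def World : Type :=
  {t : Finset Fml // t ⊆ A₀.subformulas ∧ Consistent Ax (charFml A₀.subformulas t)}

instance : Finite (World Ax A₀) :=
  Finite.of_injective (fun w : World Ax A₀ => (⟨w.1, Finset.mem_powerset.2 w.2.1⟩ :
    A₀.subformulas.powerset)) fun _ _ h => Subtype.ext (by simpa using h)

variable {Ax A₀}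

theorem exists_world_of_consistent {φ : Fml} (h : Consistent Ax φ) :
    ∃ (w : World Ax A₀) (v : Fml → Bool), IsValuation v ∧ v φ = true ∧
      ∀ B ∈ A₀.subformulas, (v B = true ↔ B ∈ w.1) := by
  obtain ⟨t, htS, ht⟩ := h.exists_consistent_and_charFml A₀.subformulas
  obtain ⟨v, hv, hφt⟩ := ht.exists_valuation
  rw [hv.map_and, Bool.and_eq_true] at hφt
  exact ⟨⟨t, htS, ht.of_and_right⟩, v, hv, hφt.1, hv.charFml_eq_true_iff.1 hφt.2⟩

namespace World

variable (w : World Ax A₀)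

theorem exists_valuation {Q : Fml} (hQ : MNProv Ax Q) :
    ∃ v : Fml → Bool, IsValuation v ∧ v Q = true ∧
      ∀ B ∈ A₀.subformulas, (v B = true ↔ B ∈ w.1) := by
  have hcons : Consistent Ax ((charFml A₀.subformulas w.1).and Q) := fun hneg =>
    w.2.2 (MNProv.of_entails (Γ := [((charFml A₀.subformulas w.1).and Q).neg, Q])
      (by simp [hneg, hQ]) fun v hv hΓ => by
      have hvQ := hΓ Q (by simp)
      simpa [hv.map_neg, hv.map_and, hvQ] using hΓ _ List.mem_cons_self)
  obtain ⟨v, hv, hvQ⟩ := hcons.exists_valuation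
  rw [hv.map_and, Bool.and_eq_true] at hvQ
  exact ⟨v, hv, hvQ.2, hv.charFml_eq_true_iff.1 hvQ.1⟩

theorem bot_not_mem : bot ∉ w.1 := fun h => by
  obtain ⟨v, hv, -, hw⟩ := w.exists_valuation MNProv.top
  simpa [hv.1] using (hw bot (w.2.1 h)).2 h

theorem imp_mem_iff {B C : Fml} (h : imp B C ∈ A₀.subformulas) :
    imp B C ∈ w.1 ↔ (B ∈ w.1 → C ∈ w.1) := by
  obtain ⟨v, hv, -, hw⟩ := w.exists_valuation MNProv.top
  rw [← hw _ h, ← hw _ (mem_subformulas_of_imp_left h), ← hw _ (mem_subformulas_of_imp_right h),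
    hv.2]
  cases v B <;> simp

theorem mem_of_provable {B : Fml} (hB : B ∈ A₀.subformulas) (h : MNProv Ax B) : B ∈ w.1 := by
  obtain ⟨v, -, hvB, hw⟩ := w.exists_valuation h
  exact (hw B hB).1 hvB

theorem mem_of_provable_imp {B C : Fml} (hB : B ∈ w.1) (hC : C ∈ A₀.subformulas)
    (h : MNProv Ax (B.imp C)) : C ∈ w.1 := by
  obtain ⟨v, hv, hvBC, hw⟩ := w.exists_valuation h
  rw [hv.2, (hw B (w.2.1 hB)).2 hB] at hvBC
  exact (hw C hC).1 (by simpa using hvBC)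

end World

def Rel (w : World Ax A₀) (V : Set (World Ax A₀)) : Prop :=
  V.Nonempty ∧ ∃ C, box C ∈ A₀.subformulas ∧ box C ∉ w.1 ∧ {y : World Ax A₀ | C ∉ y.1} ⊆ V

variable (Ax A₀) in
def frame [hne : Nonempty (World Ax A₀)] : MNFrame (World Ax A₀) where
  nonempty := hne
  rel := Rel
  rel_nonempty _ _ h := h.1
  mono _ _ _ := fun ⟨hV, C, hC, hCw, hCV⟩ hVU => ⟨hV.mono hVU, C, hC, hCw, hCV.trans hVU⟩

def Sat (w : World Ax A₀) : Fml → Prop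
  | var n => var n ∈ w.1
  | bot => False
  | imp B C => Sat w B → Sat w C
  | box B => ∀ V, Rel w V → ∃ y ∈ V, Sat y B

theorem isSat [Nonempty (World Ax A₀)] : IsSat (frame Ax A₀) Sat where
  bot _ h := h
  imp _ _ _ := Iff.rfl
  box _ _ := Iff.rfl

theorem sat_iff_mem {B : Fml} (hB : B ∈ A₀.subformulas) (w : World Ax A₀) :
    Sat w B ↔ B ∈ w.1 := by
  induction B generalizing w with
  | var n => rfl
  | bot => exact ⟨False.elim, fun h => w.bot_not_mem h⟩
  | imp B C ihB ihC =>
    rw [w.imp_mem_iff hB, ← ihB (mem_subformulas_of_imp_left hB),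
      ← ihC (mem_subformulas_of_imp_right hB)]
    rfl
  | box B ih =>
    have hB' := mem_subformulas_of_box hB
    constructor
    · intro hsat
      by_contra hBw
      have hcons : Consistent Ax B.neg :=
        .neg_of_not_provable fun h => hBw (w.mem_of_provable hB (.nec h))
      obtain ⟨y, v, hv, hvB, hy⟩ := exists_world_of_consistent (A₀ := A₀) hcons
      have hBy : B ∉ y.1 := fun h => by simp [hv.map_neg, (hy B hB').2 h] at hvB
      obtain ⟨z, hBz, hz⟩ := hsat {y | B ∉ y.1} ⟨⟨y, hBy⟩, B, hB, hBw, subset_rfl⟩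
      exact hBz ((ih hB' z).1 hz)
    · rintro hBw V ⟨-, C, hC, hCw, hCV⟩
      have hcons : Consistent Ax (B.and C.neg) :=
        .and_neg_of_not_provable_imp fun h => hCw (w.mem_of_provable_imp hBw hC (.rm h))
      obtain ⟨y, v, hv, hvBC, hy⟩ := exists_world_of_consistent (A₀ := A₀) hcons
      simp only [hv.map_and, hv.map_neg, Bool.and_eq_true, Bool.not_eq_eq_eq_not,
        Bool.not_true] at hvBC
      have hCy : C ∉ y.1 := fun h => by
        simp [(hy C (mem_subformulas_of_box hC)).2 h] at hvBC
      exact ⟨y, hCV hCy, (ih hB' y).2 ((hy B hB').1 hvBC.1)⟩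

theorem frame_isMNP [Nonempty (World Ax A₀)] (hbox : box bot ∈ A₀.subformulas)
    (hP : MNProv Ax (box bot).neg) : (frame Ax A₀).IsMNP := fun w =>
  have hbot : box bot ∉ w.1 := fun h =>
    w.bot_not_mem (w.mem_of_provable_imp h (mem_subformulas_of_box hbox) hP)
  ⟨Set.univ, Set.univ_nonempty, bot, hbox, hbot, Set.subset_univ _⟩

end Canonical

open Classical in
theorem IsSat.isValuation {W : Type*} {F : MNFrame W} {Sat : W → Fml → Prop}
    (hS : IsSat F Sat) (x : W) : IsValuation fun B => decide (Sat x B) :=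
  ⟨by simpa using hS.bot x, fun B C => by
    by_cases hB : Sat x B <;> by_cases hC : Sat x C <;> simp [hS.imp, hB, hC]⟩

open Classical in
theorem MNProv.valid {Ax : Fml → Prop} {W : Type*} {F : MNFrame W}
    (hAx : ∀ B, Ax B → Valid F B) {A : Fml} (h : MNProv Ax A) : Valid F A := by
  induction h with
  | taut hA => exact fun Sat hS x => of_decide_eq_true (isTautology_iff.1 hA _ (hS.isValuation x))
  | ax hA => exact hAx _ hA
  | mp _ _ ihAB ihA => exact fun Sat hS x => (hS.imp x _ _).1 (ihAB Sat hS x) (ihA Sat hS x)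
  | nec _ ih =>
    refine fun Sat hS x => (hS.box x _).2 fun V hV => ?_
    obtain ⟨y, hy⟩ := F.rel_nonempty x V hV
    exact ⟨y, hy, ih Sat hS y⟩
  | rm _ ih =>
    refine fun Sat hS x => (hS.imp x _ _).2 fun hA => (hS.box x _).2 fun V hV => ?_
    obtain ⟨y, hy, hyA⟩ := (hS.box x _).1 hA V hV
    exact ⟨y, hy, (hS.imp y _ _).1 (ih Sat hS y) hyA⟩

theorem MNFrame.IsMNP.valid_axP {W : Type*} {F : MNFrame W} (hF : F.IsMNP) {B : Fml}
    (hB : AxP B) : Valid F B := by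
  subst hB
  refine fun Sat hS x => (hS.imp x _ _).2 fun hbox => ?_
  obtain ⟨V, hV⟩ := hF x
  obtain ⟨y, -, hy⟩ := (hS.box x _).1 hbox V hV
  exact absurd hy (hS.bot y)

theorem MNP.of_forall_finite_valid {A : Fml}
    (h : ∀ (W : Type) (F : MNFrame W), Finite W → F.IsMNP → Valid F A) : MNP A := by
  by_contra hA
  -- `□⊥` is added as a subformula so that the canonical frame is an MNP-frame
  let A₀ := A.imp (Fml.box Fml.bot)
  have hAS : A ∈ A₀.subformulas := by simp [A₀, Fml.subformulas, Fml.mem_subformulas_self]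
  have hboxS : Fml.box Fml.bot ∈ A₀.subformulas := by
    simp [A₀, Fml.subformulas]
  obtain ⟨w, v, hv, hvA, hw⟩ :=
    Canonical.exists_world_of_consistent (A₀ := A₀) (Consistent.neg_of_not_provable hA)
  have : Nonempty (Canonical.World AxP A₀) := ⟨w⟩
  have hsat := h _ _ inferInstance (Canonical.frame_isMNP (Ax := AxP) hboxS (MNProv.ax rfl))
    Canonical.Sat Canonical.isSat w
  have hAw := (Canonical.sat_iff_mem hAS w).1 hsat
  simp [hv.map_neg, (hw A hAS).2 hAw] at hvA

/-- A formula is a theorem of MNP iff it is valid in all MNP-frames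
iff it is valid in all finite MNP-frames. -/
theorem stmt7 (A : Fml) :
    (MNP A ↔ ∀ (W : Type) (F : MNFrame W), F.IsMNP → Valid F A) ∧
    (MNP A ↔ ∀ (W : Type) (F : MNFrame W), Finite W → F.IsMNP → Valid F A) := by
  have sound (h : MNP A) (W : Type) (F : MNFrame W) (hF : F.IsMNP) : Valid F A :=
    MNProv.valid (fun _ => hF.valid_axP) h
  exact ⟨⟨sound, fun h => MNP.of_forall_finite_valid fun W F _ hF => h W F hF⟩,
    ⟨fun h W F _ hF => sound h W F hF, MNP.of_forall_finite_valid⟩⟩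
end

section
/- For any modal formula A, the following are equivalent: (1) A is a theorem of MNDF; (2) A is valid in all transitive MND-frames; (3) A is valid in all finite transitive MND-frames. -/
/-!
Soundness is checked rule by rule: axiom D holds in MND-frames because `x ≺ ‖B‖ᶜ` or
`x ≺ ‖B‖`, and axiom 4 holds in transitive frames by transitivity applied to the constant family
`U_y = ‖B‖ᶜ`.

For completeness, the valuations `Fml → Bool` that respect `⊥` and `→` and make every theorem
true (the characteristic functions of maximal consistent sets) refute every non-theorem, by
compactness of `Fml → Bool`. Identifying two of them when they agree on `B`, `□B`, `□□B` for all
subformulas `B` of `A` leaves finitely many worlds. There, a set of worlds is necessary at `x` if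
it is everything or contains the truth set of some `X ∈ {B, □B}` with `□X` true at `x`, and
`x ≺ V` iff `Vᶜ` is not necessary at `x`. Axiom D makes any two necessary sets meet (the MND
condition), axiom 4 makes a necessary set necessarily necessary (transitivity), and RM and
Necessitation give the truth lemma for the subformulas of `A`.
-/

open Set

structure IsValuation_s10 (v : Fml → Bool) : Prop where
  bot : v Fml.bot = false
  imp : ∀ B C : Fml, v (B.imp C) = (!v B || v C)

namespace IsValuation_s10

variable {v : Fml → Bool}

lemma neg (hv : IsValuation_s10 v) (A : Fml) : v A.neg = !v A := by
  simp [Fml.neg, hv.imp, hv.bot]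

lemma and (hv : IsValuation_s10 v) (A B : Fml) : v (A.and B) = (v A && v B) := by
  simp only [Fml.and, hv.neg, hv.imp]
  cases v A <;> cases v B <;> rfl

lemma mp (hv : IsValuation_s10 v) {A B : Fml} (hAB : v (A.imp B) = true) (hA : v A = true) :
    v B = true := by
  simpa [hv.imp, hA] using hAB

lemma foldr_imp (hv : IsValuation_s10 v) (L : List Fml) (A : Fml) :
    v (L.foldr Fml.imp A) = true ↔ ((∀ T ∈ L, v T = true) → v A = true) := by
  induction L with
  | nil => simp
  | cons T L ih => cases hT : v T <;> simp [hv.imp, hT, ih]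

end IsValuation_s10

lemma isClosed_setOf_isValuation : IsClosed {v : Fml → Bool | IsValuation_s10 v} := by
  have : {v : Fml → Bool | IsValuation_s10 v} =
      {v | v Fml.bot = false} ∩ ⋂ B, ⋂ C, {v | v (B.imp C) = (!v B || v C)} := by
    ext v
    simp only [mem_inter_iff, mem_iInter, mem_ofPred_eq]
    exact ⟨fun h => ⟨h.1, h.2⟩, fun h => ⟨h.1, h.2⟩⟩
  rw [this]
  refine (isClosed_eq (continuous_apply _) continuous_const).inter
    (isClosed_iInter fun B => isClosed_iInter fun C => isClosed_eq (continuous_apply _) ?_)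
  fun_prop

variable {Ax : Fml → Prop}

lemma MNProv.of_foldr_imp {L : List Fml} {A : Fml} (hL : ∀ T ∈ L, MNProv Ax T)
    (h : MNProv Ax (L.foldr Fml.imp A)) : MNProv Ax A := by
  induction L with
  | nil => exact h
  | cons T L ih =>
    exact ih (fun T' hT' => hL T' (List.mem_cons_of_mem _ hT'))
      (.mp h (hL T List.mem_cons_self))

variable (Ax) in
structure CanonicalValuation where
  val : Fml → Bool
  isValuation : IsValuation_s10 val
  val_of_mnprov : ∀ T, MNProv Ax T → val T = true

lemma exists_isValuation_of_not_mnprov {A : Fml} (hA : ¬ MNProv Ax A) {L : List Fml}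
    (hL : ∀ T ∈ L, MNProv Ax T) : ∃ v, IsValuation_s10 v ∧ v A = false ∧ ∀ T ∈ L, v T = true := by
  by_contra! h
  refine hA (MNProv.of_foldr_imp hL (.taut fun v hbot himp => ?_))
  rw [IsValuation_s10.foldr_imp ⟨hbot, himp⟩]
  intro hvL
  by_contra hvA
  obtain ⟨T, hT, hvT⟩ := h v ⟨hbot, himp⟩ (by simpa using hvA)
  exact hvT (hvL T hT)

-- Lindenbaum's lemma, as compactness of the space of valuations `Fml → Bool`.
theorem exists_canonicalValuation_val_eq_false {A : Fml} (hA : ¬ MNProv Ax A) :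
    ∃ w : CanonicalValuation Ax, w.val A = false := by
  have hs : IsCompact {v : Fml → Bool | IsValuation_s10 v ∧ v A = false} :=
    (isClosed_setOf_isValuation.inter (isClosed_eq (continuous_apply A) continuous_const)).isCompact
  obtain ⟨v, ⟨hv, hvA⟩, hthm⟩ := hs.inter_iInter_nonempty
    (fun T : {T // MNProv Ax T} => {v | v T = true})
    (fun T => isClosed_eq (continuous_apply _) continuous_const) fun u => by
      obtain ⟨v, hv, hvA, hvu⟩ := exists_isValuation_of_not_mnprov hA
        (L := u.toList.map Subtype.val) fun T hT => by
          obtain ⟨T', -, rfl⟩ := List.mem_map.1 hT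
          exact T'.2
      refine ⟨v, ⟨hv, hvA⟩, mem_iInter₂.2 fun T hT => ?_⟩
      exact hvu T (List.mem_map_of_mem (Finset.mem_toList.2 hT))
  exact ⟨⟨v, hv, fun T hT => mem_iInter.1 hthm ⟨T, hT⟩⟩, hvA⟩

theorem mnprov_of_forall_val {A : Fml} (h : ∀ w : CanonicalValuation Ax, w.val A = true) :
    MNProv Ax A := by
  by_contra hA
  obtain ⟨w, hw⟩ := exists_canonicalValuation_val_eq_false hA
  simp [h w] at hw

namespace CanonicalValuation

variable (w : CanonicalValuation Ax) {A B : Fml}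

lemma val_box_of_forall (h : ∀ w' : CanonicalValuation Ax, w'.val A = true) :
    w.val A.box = true :=
  w.val_of_mnprov _ (.nec (mnprov_of_forall_val h))

lemma val_box_of_val_box (hA : w.val A.box = true)
    (h : ∀ w' : CanonicalValuation Ax, w'.val A = true → w'.val B = true) :
    w.val B.box = true := by
  refine w.isValuation.mp (w.val_of_mnprov _ (.rm (mnprov_of_forall_val fun w' => ?_))) hA
  cases hw' : w'.val A
  · simp [w'.isValuation.imp, hw']
  · simp [w'.isValuation.imp, h w' hw']

lemma exists_val_and_val (hD : ∀ C, AxD C → Ax C) (hA : w.val A.box = true)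
    (hB : w.val B.box = true) :
    ∃ w' : CanonicalValuation Ax, w'.val A = true ∧ w'.val B = true := by
  by_contra! h
  have hnB : w.val B.neg.box = true :=
    w.val_box_of_val_box hA fun w' hw' => by simpa [w'.isValuation.neg] using h w' hw'
  have := w.val_of_mnprov _ (.ax (hD _ ⟨B, rfl⟩))
  simp [w.isValuation.neg, w.isValuation.and, hB, hnB] at this

lemma val_box_box (h4 : ∀ C, AxF C → Ax C) (hA : w.val A.box = true) :
    w.val A.box.box = true :=
  w.isValuation.mp (w.val_of_mnprov _ (.ax (h4 _ ⟨A, rfl⟩))) hA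

end CanonicalValuation

namespace MNFrame

variable {W : Type*} (F : MNFrame W)

lemma forall_rel_exists_iff (x : W) (P : W → Prop) :
    (∀ V, F.rel x V → ∃ y ∈ V, P y) ↔ ¬ F.rel x {y | P y}ᶜ := by
  refine ⟨fun h hx => ?_, fun h V hV => ?_⟩
  · obtain ⟨y, hyV, hy⟩ := h _ hx
    exact hyV hy
  · by_contra! hV'
    exact h (F.mono x V _ hV fun y hy => hV' y hy)

lemma IsTransitive.rel_of_rel_setOf_rel {F : MNFrame W} (hF : F.IsTransitive) {x : W}
    {U : Set W} (h : F.rel x {y | F.rel y U}) : F.rel x U :=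
  F.mono x _ U (hF x _ (fun _ => U) h fun _ hy => hy) (iUnion₂_subset fun _ _ => subset_rfl)

def sat (val : W → ℕ → Prop) : W → Fml → Prop
  | x, .var n => val x n
  | _, .bot => False
  | x, .imp B C => sat val x B → sat val x C
  | x, .box B => ∀ V, F.rel x V → ∃ y ∈ V, sat val y B

lemma isSat_sat (val : W → ℕ → Prop) : IsSat F (F.sat val) :=
  ⟨fun _ h => h, fun _ _ _ => Iff.rfl, fun _ _ => Iff.rfl⟩

end MNFrame

namespace IsSat

variable {W : Type*} {F : MNFrame W} {Sat : W → Fml → Prop}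

lemma sat_neg (hS : IsSat F Sat) (x : W) (A : Fml) : Sat x A.neg ↔ ¬ Sat x A := by
  simp [Fml.neg, hS.imp, hS.bot]

lemma sat_and (hS : IsSat F Sat) (x : W) (A B : Fml) :
    Sat x (A.and B) ↔ Sat x A ∧ Sat x B := by
  simp [Fml.and, hS.sat_neg, hS.imp]

lemma sat_box_iff (hS : IsSat F Sat) (x : W) (A : Fml) :
    Sat x A.box ↔ ¬ F.rel x {y | Sat y A}ᶜ := by
  rw [hS.box, F.forall_rel_exists_iff]

lemma sat_of_isTautology (hS : IsSat F Sat) {A : Fml} (hA : IsTautology A) (x : W) :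
    Sat x A := by
  classical
  have hv : IsValuation_s10 fun B => decide (Sat x B) :=
    ⟨by simpa using hS.bot x, fun B C => by by_cases Sat x B <;> simp [hS.imp, *]⟩
  simpa using hA (fun B => decide (Sat x B)) hv.bot hv.imp

lemma sat_of_mnprov (hS : IsSat F Sat) (hAx : ∀ B, Ax B → ∀ x, Sat x B) {A : Fml}
    (h : MNProv Ax A) (x : W) : Sat x A := by
  induction h generalizing x with
  | taut hA => exact hS.sat_of_isTautology hA x
  | ax hA => exact hAx _ hA x
  | mp _ _ ihAB ihA => exact (hS.imp x _ _).1 (ihAB x) (ihA x)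
  | nec _ ih =>
    refine (hS.box x _).2 fun V hV => ?_
    obtain ⟨y, hy⟩ := F.rel_nonempty x V hV
    exact ⟨y, hy, ih y⟩
  | rm _ ih =>
    refine (hS.imp x _ _).2 fun hA => (hS.box x _).2 fun V hV => ?_
    obtain ⟨y, hyV, hy⟩ := (hS.box x _).1 hA V hV
    exact ⟨y, hyV, (hS.imp y _ _).1 (ih y) hy⟩

end IsSat

lemma MNFrame.IsMND.sat_of_axD {W : Type*} {F : MNFrame W} (hF : F.IsMND)
    {Sat : W → Fml → Prop} (hS : IsSat F Sat) {A : Fml} (hA : AxD A) (x : W) : Sat x A := by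
  obtain ⟨B, rfl⟩ := hA
  have hnB : {y | Sat y B.neg}ᶜ = {y | Sat y B}ᶜᶜ := by ext; simp [hS.sat_neg]
  rw [hS.sat_neg, hS.sat_and, hS.sat_box_iff, hS.sat_box_iff, hnB]
  exact fun h => (hF x _).elim h.1 h.2

lemma MNFrame.IsTransitive.sat_of_axF {W : Type*} {F : MNFrame W} (hF : F.IsTransitive)
    {Sat : W → Fml → Prop} (hS : IsSat F Sat) {A : Fml} (hA : AxF A) (x : W) : Sat x A := by
  obtain ⟨B, rfl⟩ := hA
  rw [hS.imp, hS.sat_box_iff, hS.sat_box_iff]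
  intro hB hBB
  refine hB (hF.rel_of_rel_setOf_rel (F.mono x _ _ hBB fun y hy => ?_))
  simpa [hS.sat_box_iff] using hy

theorem valid_of_mndf {W : Type*} {F : MNFrame W} (hT : F.IsTransitive) (hD : F.IsMND)
    {A : Fml} (h : MNDF A) : Valid F A :=
  fun _ hS => hS.sat_of_mnprov (fun _ hB => hB.elim (hD.sat_of_axD hS) (hT.sat_of_axF hS)) h

def Fml.subformulas_s10 : Fml → Finset Fml
  | .var n => {.var n}
  | .bot => {.bot}
  | .imp B C => insert (.imp B C) (B.subformulas_s10 ∪ C.subformulas_s10)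
  | .box B => insert (.box B) B.subformulas_s10

lemma Fml.mem_subformulas_self_s10 (A : Fml) : A ∈ A.subformulas_s10 := by
  cases A <;> simp [subformulas_s10]

def boxExt (Γ : Finset Fml) : Finset Fml := Γ ∪ Γ.image Fml.box

lemma subset_boxExt (Γ : Finset Fml) : Γ ⊆ boxExt Γ := Finset.subset_union_left

lemma box_mem_boxExt {Γ : Finset Fml} {A : Fml} (h : A ∈ Γ) : A.box ∈ boxExt Γ :=
  Finset.mem_union_right _ (Finset.mem_image_of_mem _ h)

namespace Filtration

variable (Ax) (Γ : Finset Fml)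

-- A world keeps the values of a canonical valuation on `B`, `□B`, `□□B` for `B ∈ Γ` and is
-- `false` on all other formulas.
def restrict (w : CanonicalValuation Ax) : Fml → Bool :=
  fun B => decide (B ∈ boxExt (boxExt Γ)) && w.val B

abbrev World : Type := range (restrict Ax Γ)

variable {Ax Γ}

def World.mk (w : CanonicalValuation Ax) : World Ax Γ := ⟨restrict Ax Γ w, w, rfl⟩

lemma World.exists_eq_mk (x : World Ax Γ) : ∃ w, x = World.mk w :=
  let ⟨w, hw⟩ := x.2
  ⟨w, Subtype.ext hw.symm⟩

lemma World.mk_apply {w : CanonicalValuation Ax} {B : Fml} (hB : B ∈ boxExt (boxExt Γ)) :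
    (World.mk w : World Ax Γ).1 B = w.val B := by
  simp [World.mk, restrict, hB]

def truthSet (X : Fml) : Set (World Ax Γ) := {x | x.1 X = true}

lemma mk_mem_truthSet {w : CanonicalValuation Ax} {X : Fml} (hX : X ∈ boxExt (boxExt Γ)) :
    World.mk w ∈ truthSet (Γ := Γ) X ↔ w.val X = true := by
  rw [truthSet, mem_ofPred_eq, World.mk_apply hX]

def Necessary (x : World Ax Γ) (S : Set (World Ax Γ)) : Prop :=
  S = univ ∨ ∃ X ∈ boxExt Γ, x.1 X.box = true ∧ truthSet X ⊆ S

lemma Necessary.mono {x : World Ax Γ} {S S' : Set (World Ax Γ)} (h : Necessary x S)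
    (hS : S ⊆ S') : Necessary x S' := by
  rcases h with rfl | ⟨X, hX, hbox, hsub⟩
  · exact Or.inl (univ_subset_iff.1 hS)
  · exact Or.inr ⟨X, hX, hbox, hsub.trans hS⟩

lemma necessary_truthSet_iff {x : World Ax Γ} {C : Fml} (hC : C ∈ boxExt Γ) :
    Necessary x (truthSet C) ↔ x.1 C.box = true := by
  refine ⟨fun h => ?_, fun h => Or.inr ⟨C, hC, h, subset_rfl⟩⟩
  obtain ⟨w, rfl⟩ := x.exists_eq_mk
  rw [World.mk_apply (box_mem_boxExt hC)]
  have hC' := subset_boxExt _ hC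
  rcases h with h | ⟨X, hX, hbox, hsub⟩
  · exact w.val_box_of_forall fun w' => (mk_mem_truthSet hC').1 (h ▸ mem_univ _)
  · rw [World.mk_apply (box_mem_boxExt hX)] at hbox
    exact w.val_box_of_val_box hbox fun w' hw' =>
      (mk_mem_truthSet hC').1 (hsub ((mk_mem_truthSet (subset_boxExt _ hX)).2 hw'))

lemma truthSet_inter_nonempty (hD : ∀ C, AxD C → Ax C) {x : World Ax Γ} {X Y : Fml}
    (hX : X ∈ boxExt Γ) (hY : Y ∈ boxExt Γ) (hbX : x.1 X.box = true) (hbY : x.1 Y.box = true) :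
    (truthSet (Ax := Ax) (Γ := Γ) X ∩ truthSet Y).Nonempty := by
  obtain ⟨w, rfl⟩ := x.exists_eq_mk
  rw [World.mk_apply (box_mem_boxExt hX)] at hbX
  rw [World.mk_apply (box_mem_boxExt hY)] at hbY
  obtain ⟨w', hw'X, hw'Y⟩ := w.exists_val_and_val hD hbX hbY
  exact ⟨World.mk w', (mk_mem_truthSet (subset_boxExt _ hX)).2 hw'X,
    (mk_mem_truthSet (subset_boxExt _ hY)).2 hw'Y⟩

lemma Necessary.inter_nonempty (hD : ∀ C, AxD C → Ax C) {x : World Ax Γ}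
    {S S' : Set (World Ax Γ)} (h : Necessary x S) (h' : Necessary x S') :
    (S ∩ S').Nonempty := by
  rcases h with rfl | ⟨X, hX, hbX, hsub⟩ <;> rcases h' with rfl | ⟨Y, hY, hbY, hsub'⟩
  · exact ⟨x, trivial, trivial⟩
  · obtain ⟨y, hy, -⟩ := truthSet_inter_nonempty hD hY hY hbY hbY
    exact ⟨y, trivial, hsub' hy⟩
  · obtain ⟨y, hy, -⟩ := truthSet_inter_nonempty hD hX hX hbX hbX
    exact ⟨y, hsub hy, trivial⟩
  · exact (truthSet_inter_nonempty hD hX hY hbX hbY).mono (inter_subset_inter hsub hsub')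

lemma World.box_box_of_box (h4 : ∀ C, AxF C → Ax C) {x : World Ax Γ} {B : Fml} (hB : B ∈ Γ)
    (h : x.1 B.box = true) : x.1 B.box.box = true := by
  obtain ⟨w, rfl⟩ := x.exists_eq_mk
  rw [World.mk_apply (subset_boxExt _ (box_mem_boxExt hB))] at h
  rw [World.mk_apply (box_mem_boxExt (box_mem_boxExt hB))]
  exact w.val_box_box h4 h

-- The witnesses include `□B` for `B ∈ Γ` so that axiom 4 can trade a witness `B` for `□B`.
lemma Necessary.setOf_necessary (h4 : ∀ C, AxF C → Ax C) {x : World Ax Γ}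
    {S : Set (World Ax Γ)} (h : Necessary x S) : Necessary x {y | Necessary y S} := by
  rcases h with rfl | ⟨X, hX, hbX, hsub⟩
  · exact Or.inl (eq_univ_of_forall fun _ => Or.inl rfl)
  have hT : truthSet X.box ⊆ {y | Necessary y S} := fun y hy => Or.inr ⟨X, hX, hy, hsub⟩
  rcases Finset.mem_union.1 hX with hX' | hX'
  · exact Or.inr ⟨X.box, box_mem_boxExt hX', World.box_box_of_box h4 hX' hbX, hT⟩
  · obtain ⟨B, hB, rfl⟩ := Finset.mem_image.1 hX'
    exact Or.inr ⟨B.box, hX, hbX, fun y hy => hT (World.box_box_of_box h4 hB hy)⟩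

variable [Nonempty (World Ax Γ)]

variable (Ax Γ) in
def frame : MNFrame (World Ax Γ) where
  nonempty := ‹_›
  rel x V := ¬ Necessary x Vᶜ
  rel_nonempty x V h := by
    by_contra hV
    exact h (Or.inl (by simp [not_nonempty_iff_eq_empty.1 hV]))
  mono _ _ _ hV hVU h := hV (h.mono (compl_subset_compl.2 hVU))

lemma isMND_frame (hD : ∀ C, AxD C → Ax C) : (frame Ax Γ).IsMND := by
  intro x V
  show ¬ Necessary x Vᶜ ∨ ¬ Necessary x Vᶜᶜ
  rw [← not_and_or]
  rintro ⟨h, h'⟩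
  simpa using h.inter_nonempty hD h'

lemma isTransitive_frame (h4 : ∀ C, AxF C → Ax C) : (frame Ax Γ).IsTransitive := by
  intro x V U hV hU hx
  refine hV ((hx.setOf_necessary h4).mono fun y hy hyV => hU y hyV (hy.mono ?_))
  exact compl_subset_compl.2 (subset_biUnion_of_mem hyV)

instance : Finite (World Ax Γ) := by
  refine Finite.of_injective (fun x (B : boxExt (boxExt Γ)) => x.1 B) fun x y h => ?_
  obtain ⟨w, rfl⟩ := x.exists_eq_mk
  obtain ⟨w', rfl⟩ := y.exists_eq_mk
  refine Subtype.ext (funext fun B => ?_)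
  by_cases hB : B ∈ boxExt (boxExt Γ)
  · exact congrFun h ⟨B, hB⟩
  · simp [World.mk, restrict, hB]

lemma sat_frame_iff {B : Fml} (hB : B.subformulas_s10 ⊆ Γ) (x : World Ax Γ) :
    (frame Ax Γ).sat (fun x n => x.1 (.var n) = true) x B ↔ x.1 B = true := by
  have hS := (frame Ax Γ).isSat_sat fun x n => x.1 (.var n) = true
  have hmem {D : Fml} (hD : D ∈ Γ) : D ∈ boxExt (boxExt Γ) := subset_boxExt _ (subset_boxExt _ hD)
  induction B generalizing x with
  | var n => rfl
  | bot =>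
    obtain ⟨w, rfl⟩ := x.exists_eq_mk
    rw [World.mk_apply (hmem (hB (Fml.mem_subformulas_self_s10 _))), w.isValuation.bot]
    simpa using hS.bot _
  | imp B C ihB ihC =>
    have hB' : B.subformulas_s10 ⊆ Γ := fun D hD => hB (by simp [Fml.subformulas_s10, hD])
    have hC' : C.subformulas_s10 ⊆ Γ := fun D hD => hB (by simp [Fml.subformulas_s10, hD])
    rw [hS.imp]
    refine (imp_congr (ihB hB' x) (ihC hC' x)).trans ?_
    obtain ⟨w, rfl⟩ := x.exists_eq_mk
    rw [World.mk_apply (hmem (hB (Fml.mem_subformulas_self_s10 _))),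
      World.mk_apply (hmem (hB' (Fml.mem_subformulas_self_s10 _))),
      World.mk_apply (hmem (hC' (Fml.mem_subformulas_self_s10 _))), w.isValuation.imp]
    cases w.val B <;> cases w.val C <;> simp
  | box C ih =>
    have hC : C.subformulas_s10 ⊆ Γ := fun D hD => hB (by simp [Fml.subformulas_s10, hD])
    have hCset : {y | (frame Ax Γ).sat (fun x n => x.1 (.var n) = true) y C} = truthSet C := by
      ext y; exact ih hC y
    rw [hS.sat_box_iff, hCset]
    show ¬¬Necessary x (truthSet C)ᶜᶜ ↔ _
    rw [not_not, compl_compl,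
      necessary_truthSet_iff (subset_boxExt _ (hC (Fml.mem_subformulas_self_s10 _)))]

end Filtration

theorem mnprov_of_forall_finite_valid (hD : ∀ C, AxD C → Ax C) (h4 : ∀ C, AxF C → Ax C)
    {A : Fml} (h : ∀ (W : Type) (F : MNFrame W), Finite W → F.IsTransitive → F.IsMND → Valid F A) :
    MNProv Ax A := by
  by_contra hA
  obtain ⟨w, hw⟩ := exists_canonicalValuation_val_eq_false hA
  let x : Filtration.World Ax A.subformulas_s10 := .mk w
  have : Nonempty (Filtration.World Ax A.subformulas_s10) := ⟨x⟩
  have hx := h _ _ inferInstance (Filtration.isTransitive_frame h4) (Filtration.isMND_frame hD) _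
    ((Filtration.frame Ax _).isSat_sat fun y n => y.1 (.var n) = true) x
  rw [Filtration.sat_frame_iff subset_rfl, Filtration.World.mk_apply
    (subset_boxExt _ (subset_boxExt _ (A.mem_subformulas_self_s10))), hw] at hx
  exact Bool.false_ne_true hx

/-- A formula is a theorem of MNDF iff it is valid in all transitive
MND-frames iff it is valid in all finite transitive MND-frames. -/
theorem stmt10 (A : Fml) :
    (MNDF A ↔ ∀ (W : Type) (F : MNFrame W), F.IsTransitive → F.IsMND → Valid F A) ∧
    (MNDF A ↔ ∀ (W : Type) (F : MNFrame W), Finite W → F.IsTransitive → F.IsMND → Valid F A) := by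
  have complete := mnprov_of_forall_finite_valid (A := A) (fun _ => Or.inl) (fun _ => Or.inr)
  exact ⟨⟨fun h _ _ hT hD => valid_of_mndf hT hD h, fun h => complete fun W F _ => h W F⟩,
    ⟨fun h _ _ _ hT hD => valid_of_mndf hT hD h, complete⟩⟩
end
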